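/- arXiv:1407.5720 — 2 statements merged into one kernel-verified Lean document; each statement's English description precedes it below -/
import Mathlib

section
/- Let γ, C1, C2, Δ, K, φ, θΔ be real numbers with γ ≥ 0, C1 < 0, K ≥ 0, cos(−Δ + φ) ≥ 1/√2, and suppose θΔ = C1·exp(−Δ) + C2·exp(Δ) + γ, θΔ − γ = (2/3)·K·cos(−Δ + φ), and K·cos φ = (3/2)·(C1 + C2 + 4γ/3). Then C2·exp(Δ) ≥ (1/√2)·|C1 + C2 + 4γ/3| − 4γ/3. -/
/-- Lower bound on the hyperbolic-mode term `C₂ e^Δ` from the boundary conditions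
relating a state on the foot-contact section at time `0` to a post-contact state
at time `−Δ` under the linearized equations. -/
theorem hyperbolic_mode_lower_bound
    (γ C1 C2 Δ K φ θΔ : ℝ)
    (hγ : γ ≥ 0) (hC1 : C1 < 0) (hK : K ≥ 0)
    (hcos : Real.cos (-Δ + φ) ≥ 1 / Real.sqrt 2)
    (hθΔ : θΔ = C1 * Real.exp (-Δ) + C2 * Real.exp Δ + γ)
    (hKcosΔ : θΔ - γ = 2 / 3 * K * Real.cos (-Δ + φ))
    (hKcosφ : K * Real.cos φ = 3 / 2 * (C1 + C2 + 4 * γ / 3)) :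
    C2 * Real.exp Δ ≥ 1 / Real.sqrt 2 * |C1 + C2 + 4 * γ / 3| - 4 * γ / 3 := by
  set A := C1 + C2 + 4 * γ / 3 with hA
  have hs : (0:ℝ) < Real.sqrt 2 := Real.sqrt_pos.mpr (by norm_num)
  have hsq : Real.sqrt 2 ^ 2 = 2 := Real.sq_sqrt (by norm_num)
  have hs1 : (1:ℝ) ≤ Real.sqrt 2 := by nlinarith
  have hsle : 1 / Real.sqrt 2 ≤ 1 := by
    rw [div_le_one hs]; exact hs1
  have hspos : 0 < 1 / Real.sqrt 2 := by positivity
  -- K ≥ 3/2 |A|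
  have hKA : 3 / 2 * |A| ≤ K := by
    have h1 : |K * Real.cos φ| ≤ K := by
      rw [abs_mul, abs_of_nonneg hK]
      nlinarith [Real.abs_cos_le_one φ, abs_nonneg (Real.cos φ)]
    have h2 : |K * Real.cos φ| = 3 / 2 * |A| := by
      rw [hKcosφ, abs_mul]; norm_num
    linarith [h2 ▸ h1]
  -- 2/3 K cos ≥ 2/3 K / √2
  have hcospos : (0:ℝ) ≤ Real.cos (-Δ + φ) := le_trans hspos.le hcos
  have hmul : 2 / 3 * K * (1 / Real.sqrt 2) ≤ 2 / 3 * K * Real.cos (-Δ + φ) := by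
    have : 0 ≤ 2 / 3 * K := by linarith
    nlinarith
  have hexp : 0 < Real.exp (-Δ) := Real.exp_pos _
  have hC1e : C1 * Real.exp (-Δ) < 0 := mul_neg_of_neg_of_pos hC1 hexp
  have hsum : C1 * Real.exp (-Δ) + C2 * Real.exp Δ = 2 / 3 * K * Real.cos (-Δ + φ) := by
    linarith [hKcosΔ, hθΔ]
  have habs : 0 ≤ |A| := abs_nonneg _
  have hKA' : 2 / 3 * K * (1 / Real.sqrt 2) ≥ |A| * (1 / Real.sqrt 2) := by
    nlinarith
  nlinarith [mul_comm (|A|) (1 / Real.sqrt 2)]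
end

section
/- Let γ, C1, C2, Δ, K, φ, θΔ, δ be real numbers satisfying: γ ≥ 0, C1 < 0, C2 > 0, K ≥ 0, cos(−Δ + φ) ≥ 1/√2, θΔ = C1·exp(−Δ) + C2·exp(Δ) + γ, θΔ − γ = (2/3)·K·cos(−Δ + φ), K·cos φ = (3/2)·(C1 + C2 + 4γ/3), and (1/√2)·|C1 + C2 + 4γ/3| − 4γ/3 ≥ δ > 0. Then Δ ≥ log(δ / C2). In particular, Δ → +∞ as C2 → 0⁺ with the other bounds held uniformly. -/
open Real

/-! The swing-leg amplitude bounds the initial value, `(3/2)|C₁ + C₂ + 4γ/3| ≤ K`, and the phase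
condition at `-Δ` then gives `θΔ - γ ≥ |C₁ + C₂ + 4γ/3| / √2 ≥ δ`. Since the decaying stance mode
`C₁ e^{-Δ}` is negative, the growing mode alone satisfies `C₂ e^Δ ≥ δ`, i.e. `Δ ≥ log (δ / C₂)`. -/

lemma abs_le_of_mul_cos_eq {K φ a : ℝ} (hK : 0 ≤ K) (h : K * cos φ = a) : |a| ≤ K := by
  rw [← h, abs_mul, abs_of_nonneg hK]
  exact mul_le_of_le_one_right hK (abs_cos_le_one φ)

lemma inv_sqrt_two_mul_abs_le_mul_cos {K φ ψ a : ℝ} (hK : 0 ≤ K) (h : K * cos φ = a)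
    (hψ : 1 / √2 ≤ cos ψ) : 1 / √2 * |a| ≤ K * cos ψ :=
  calc 1 / √2 * |a| ≤ 1 / √2 * K := by gcongr; exact abs_le_of_mul_cos_eq hK h
    _ = K * (1 / √2) := mul_comm _ _
    _ ≤ K * cos ψ := mul_le_mul_of_nonneg_left hψ hK

lemma log_div_le_of_le_mul_exp {δ C Δ : ℝ} (hδ : 0 < δ) (hC : 0 < C) (h : δ ≤ C * exp Δ) :
    log (δ / C) ≤ Δ := by
  rw [log_le_iff_le_exp (div_pos hδ hC), div_le_iff₀ hC, mul_comm]
  exact h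

/-- Under the boundary conditions of the simplest walking model's linearized step
map, the step duration satisfies `Δ ≥ log (δ / C₂)`; in particular `Δ → +∞` as
`C₂ → 0⁺` with the other bounds held uniformly. -/
theorem step_duration_lower_bound
    (γ C1 C2 Δ K φ θΔ δ : ℝ)
    (hγ : γ ≥ 0) (hC1 : C1 < 0) (hC2 : C2 > 0) (hK : K ≥ 0)
    (hcos : Real.cos (-Δ + φ) ≥ 1 / Real.sqrt 2)
    (hθΔ : θΔ = C1 * Real.exp (-Δ) + C2 * Real.exp Δ + γ)
    (hKcosΔ : θΔ - γ = 2 / 3 * K * Real.cos (-Δ + φ))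
    (hKcosφ : K * Real.cos φ = 3 / 2 * (C1 + C2 + 4 * γ / 3))
    (hδ : 1 / Real.sqrt 2 * |C1 + C2 + 4 * γ / 3| - 4 * γ / 3 ≥ δ)
    (hδpos : δ > 0) :
    Δ ≥ Real.log (δ / C2) := by
  have hamplitude : 1 / √2 * |C1 + C2 + 4 * γ / 3| ≤ 2 / 3 * K * cos (-Δ + φ) :=
    inv_sqrt_two_mul_abs_le_mul_cos (by positivity) (by linear_combination 2 / 3 * hKcosφ) hcos
  have hdecaying : C1 * exp (-Δ) < 0 := mul_neg_of_neg_of_pos hC1 (exp_pos _)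
  exact log_div_le_of_le_mul_exp hδpos hC2 (by linarith)
end
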